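/- Let n ≥ 1 and M ≥ n be integers. Let P : Fin n → ℝ be an antitone quantum distribution with P(i) = p(i)/M, p(i) positive integers summing to M, and let U : Fin n → ℝ assign U(i) = 1/M for i < n−1 and U(n−1) = (M−n+1)/M. Assume P ≠ U. Then for every quantum distribution Q : Fin n → ℝ with the same quantum (Q(i) = q(i)/M, q(i) positive integers summing to M), the normalized entropic divergence KN(P‖Q) = KL(P‖Q) / KL(P‖U) satisfies 0 ≤ KN(P‖Q) ≤ 1. -/

import Mathlib

/-!
Writing `Q i * klFun (P i / Q i) = P i * log (P i / Q i) + Q i - P i` turns `KL P Q` into a sum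
of nonnegative terms (Gibbs), which is positive as soon as `P ≠ Q`; this gives `0 ≤ KN` and
`KL P U > 0`. For the upper bound, `KL P Q - KL P U = ∑ P i * log₂ (U i / Q i)`. Every ratio
`U i / Q i = 1 / q i` is at most `1` except at the last cell, where `P` is smallest, so the sum is
at most `P last * log₂ (∏ U i / ∏ Q i) = P last * log₂ ((M - n + 1) / ∏ q i)`. Finally
`∏ q i - 1 ≥ ∑ (q i - 1) = M - n` for integers `q i ≥ 1`.
-/

noncomputable def KL {n : ℕ} (P Q : Fin n → ℝ) : ℝ :=
  ∑ i, P i * Real.logb 2 (P i / Q i)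

open Real Finset InformationTheory

theorem Finset.sum_sub_one_le_prod_sub_one {ι R : Type*} [CommRing R] [LinearOrder R]
    [IsStrictOrderedRing R] (s : Finset ι) {x : ι → R} (hx : ∀ i ∈ s, 1 ≤ x i) :
    ∑ i ∈ s, (x i - 1) ≤ ∏ i ∈ s, x i - 1 := by
  classical
  induction s using Finset.induction_on with
  | empty => simp
  | insert a s ha ih =>
    rw [sum_insert ha, prod_insert ha]
    have hxa : 1 ≤ x a := hx a (mem_insert_self a s)
    have hs : ∀ i ∈ s, 1 ≤ x i := fun i hi => hx i (mem_insert_of_mem hi)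
    have hprod : 1 ≤ ∏ i ∈ s, x i := one_le_prod hs
    nlinarith [ih hs, mul_nonneg (sub_nonneg.2 hxa) (sub_nonneg.2 hprod)]

theorem sum_mul_le_mul_sum_of_nonpos {ι : Type*} [Fintype ι] {P w : ι → ℝ} (j : ι)
    (hPj : ∀ i, P j ≤ P i) (hw : ∀ i ≠ j, w i ≤ 0) :
    ∑ i, P i * w i ≤ P j * ∑ i, w i := by
  rw [mul_sum]
  refine sum_le_sum fun i _ => ?_
  rcases eq_or_ne i j with rfl | hij
  · rfl
  · exact mul_le_mul_of_nonpos_right (hPj i) (hw i hij)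

section KL

variable {n : ℕ} {P Q R : Fin n → ℝ}

theorem KL_eq_sum_mul_klFun (hQ : ∀ i, Q i ≠ 0) (hsum : ∑ i, P i = ∑ i, Q i) :
    KL P Q = (∑ i, Q i * klFun (P i / Q i)) / log 2 := by
  have hterm : ∀ i, Q i * klFun (P i / Q i) = P i * log (P i / Q i) + (Q i - P i) := by
    intro i
    rw [klFun_apply]
    field_simp [hQ i]
    ring
  simp only [hterm, sum_add_distrib, sum_sub_distrib, hsum, sub_self, add_zero, KL, logb,
    sum_div, mul_div_assoc]

theorem KL_nonneg (hP : ∀ i, 0 ≤ P i) (hQ : ∀ i, 0 < Q i) (hsum : ∑ i, P i = ∑ i, Q i) :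
    0 ≤ KL P Q := by
  rw [KL_eq_sum_mul_klFun (fun i => (hQ i).ne') hsum]
  exact div_nonneg (sum_nonneg fun i _ =>
    mul_nonneg (hQ i).le (klFun_nonneg (div_nonneg (hP i) (hQ i).le))) (log_nonneg one_le_two)

theorem KL_pos (hP : ∀ i, 0 ≤ P i) (hQ : ∀ i, 0 < Q i) (hsum : ∑ i, P i = ∑ i, Q i)
    (hPQ : P ≠ Q) : 0 < KL P Q := by
  rw [KL_eq_sum_mul_klFun (fun i => (hQ i).ne') hsum]
  have hratio : ∀ i, 0 ≤ P i / Q i := fun i => div_nonneg (hP i) (hQ i).le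
  obtain ⟨j, hj⟩ := Function.ne_iff.mp hPQ
  have hklFun_j : klFun (P j / Q j) ≠ 0 := by
    rwa [Ne, klFun_eq_zero_iff (hratio j), div_eq_one_iff_eq (hQ j).ne']
  refine div_pos (sum_pos' (fun i _ => mul_nonneg (hQ i).le (klFun_nonneg (hratio i)))
    ⟨j, mem_univ j, mul_pos (hQ j) ((klFun_nonneg (hratio j)).lt_of_ne' hklFun_j)⟩)
    (log_pos one_lt_two)

theorem KL_sub_KL (hP : ∀ i, P i ≠ 0) (hQ : ∀ i, Q i ≠ 0) (hR : ∀ i, R i ≠ 0) :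
    KL P Q - KL P R = ∑ i, P i * logb 2 (R i / Q i) := by
  rw [KL, KL, ← sum_sub_distrib]
  refine sum_congr rfl fun i _ => ?_
  rw [logb_div (hP i) (hQ i), logb_div (hP i) (hR i), logb_div (hR i) (hQ i)]
  ring

end KL

theorem sum_mul_logb_div_nonpos {ι : Type*} [Fintype ι] {P U Q : ι → ℝ} (j : ι)
    (hPj : ∀ i, P j ≤ P i) (hPj₀ : 0 ≤ P j) (hU : ∀ i, 0 < U i) (hQ : ∀ i, 0 < Q i)
    (hUQ : ∀ i ≠ j, U i ≤ Q i) (hprod : ∏ i, U i ≤ ∏ i, Q i) :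
    ∑ i, P i * logb 2 (U i / Q i) ≤ 0 :=
  calc ∑ i, P i * logb 2 (U i / Q i)
      ≤ P j * ∑ i, logb 2 (U i / Q i) :=
        sum_mul_le_mul_sum_of_nonpos j hPj fun i hi =>
          logb_nonpos one_lt_two (div_pos (hU i) (hQ i)).le
            (div_le_one_of_le₀ (hUQ i hi) (hQ i).le)
    _ = P j * logb 2 ((∏ i, U i) / ∏ i, Q i) := by
        rw [← prod_div_distrib, logb_prod _ _ fun i _ => (div_pos (hU i) (hQ i)).ne']
    _ ≤ 0 := mul_nonpos_of_nonneg_of_nonpos hPj₀ <|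
        logb_nonpos one_lt_two (div_pos (prod_pos fun i _ => hU i) (prod_pos fun i _ => hQ i)).le
          (div_le_one_of_le₀ hprod (prod_pos fun i _ => hQ i).le)

section Quantum

variable {ι : Type*} {M : ℕ} {q : ι → ℕ} {Q : ι → ℝ}

theorem quantum_pos (hM : 0 < M) (hq : ∀ i, 0 < q i) (hQ : ∀ i, Q i = q i / M) (i : ι) :
    0 < Q i := by
  rw [hQ]
  exact div_pos (Nat.cast_pos.2 (hq i)) (Nat.cast_pos.2 hM)

variable [Fintype ι]

theorem quantum_sum_eq_one (hM : M ≠ 0) (hqsum : ∑ i, q i = M) (hQ : ∀ i, Q i = q i / M) :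
    ∑ i, Q i = 1 := by
  simp only [hQ, ← sum_div, ← Nat.cast_sum, hqsum]
  exact div_self (Nat.cast_ne_zero.2 hM)

theorem quantum_prod_le_prod {u : ι → ℕ} {U : ι → ℝ} (hU : ∀ i, U i = u i / M)
    (hQ : ∀ i, Q i = q i / M) (h : ∏ i, u i ≤ ∏ i, q i) : ∏ i, U i ≤ ∏ i, Q i := by
  simp only [hU, hQ, prod_div_distrib, prod_const]
  exact div_le_div_of_nonneg_right (by exact_mod_cast h) (by positivity)

theorem sub_card_add_one_le_prod (hq : ∀ i, 0 < q i) (hqsum : ∑ i, q i = M) :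
    M - Fintype.card ι + 1 ≤ ∏ i, q i := by
  have h := sum_sub_one_le_prod_sub_one univ fun i _ => (Nat.one_le_cast (α := ℤ)).2 (hq i)
  rw [sum_sub_distrib, ← Nat.cast_sum, hqsum, sum_const, card_univ, nsmul_eq_mul,
    mul_one, ← Nat.cast_prod] at h
  have hprod : 0 < ∏ i, q i := prod_pos fun i _ => hq i
  omega

variable [DecidableEq ι]

/-- The numerators of `U`: one quantum in every cell except `j`, which takes the rest. -/
def minQuantum (M : ℕ) (j i : ι) : ℕ :=
  1 + if i = j then M - Fintype.card ι else 0

theorem minQuantum_pos (M : ℕ) (j i : ι) : 0 < minQuantum M j i := by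
  unfold minQuantum
  omega

theorem sum_minQuantum (hM : Fintype.card ι ≤ M) (j : ι) : ∑ i, minQuantum M j i = M := by
  simp only [minQuantum, sum_add_distrib, sum_ite_eq', mem_univ, if_true, sum_const, card_univ,
    smul_eq_mul, mul_one]
  omega

theorem prod_minQuantum_le_prod (hq : ∀ i, 0 < q i) (hqsum : ∑ i, q i = M) (j : ι) :
    ∏ i, minQuantum M j i ≤ ∏ i, q i := by
  rw [Fintype.prod_eq_single j fun i hij => by simp [minQuantum, hij], minQuantum, if_pos rfl]
  have := sub_card_add_one_le_prod hq hqsum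
  omega

end Quantum

theorem eq_minQuantum_div {n M : ℕ} (hn : 1 ≤ n) (hM : n ≤ M) {U : Fin n → ℝ}
    (hU1 : ∀ i : Fin n, (i : ℕ) < n - 1 → U i = 1 / M)
    (hU2 : U ⟨n - 1, by omega⟩ = ((M : ℝ) - n + 1) / M) (i : Fin n) :
    U i = minQuantum M ⟨n - 1, by omega⟩ i / M := by
  by_cases hi : i = ⟨n - 1, by omega⟩
  · rw [hi, hU2, minQuantum, if_pos rfl, Fintype.card_fin]
    push_cast [hM]
    ring
  · have hne : (i : ℕ) ≠ n - 1 := fun h => hi (Fin.ext h)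
    have hlt : (i : ℕ) < n - 1 := by omega
    rw [hU1 i hlt, minQuantum, if_neg hi]
    norm_num

/-- The normalized entropic divergence `KN(P‖Q) = KL(P‖Q) / KL(P‖U)`, where `U` is the
maximizing quantum distribution, lies in the interval `[0, 1]`. -/
theorem normalized_kl_mem_unit_interval (n M : ℕ) (hn : 1 ≤ n) (hM : n ≤ M)
    (p : Fin n → ℕ) (hp : ∀ i, 0 < p i) (hpsum : ∑ i, p i = M)
    (P : Fin n → ℝ) (hP : ∀ i, P i = (p i : ℝ) / (M : ℝ))
    (hanti : Antitone P)
    (U : Fin n → ℝ)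
    (hU1 : ∀ i : Fin n, (i : ℕ) < n - 1 → U i = 1 / (M : ℝ))
    (hU2 : U ⟨n - 1, by omega⟩ = ((M : ℝ) - (n : ℝ) + 1) / (M : ℝ))
    (hPU : P ≠ U)
    (q : Fin n → ℕ) (hq : ∀ i, 0 < q i) (hqsum : ∑ i, q i = M)
    (Q : Fin n → ℝ) (hQ : ∀ i, Q i = (q i : ℝ) / (M : ℝ)) :
    0 ≤ KL P Q / KL P U ∧ KL P Q / KL P U ≤ 1 := by
  have hM₀ : 0 < M := by omega
  set j : Fin n := ⟨n - 1, by omega⟩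
  have hU := eq_minQuantum_div hn hM hU1 hU2
  have hPpos := quantum_pos hM₀ hp hP
  have hQpos := quantum_pos hM₀ hq hQ
  have hUpos := quantum_pos hM₀ (minQuantum_pos M j) hU
  have hPsum := quantum_sum_eq_one hM₀.ne' hpsum hP
  have hQsum := quantum_sum_eq_one hM₀.ne' hqsum hQ
  have hUsum := quantum_sum_eq_one hM₀.ne' (sum_minQuantum (by simpa using hM) j) hU
  have hKLU : 0 < KL P U := KL_pos (fun i => (hPpos i).le) hUpos (by rw [hPsum, hUsum]) hPU
  refine ⟨div_nonneg (KL_nonneg (fun i => (hPpos i).le) hQpos (by rw [hPsum, hQsum])) hKLU.le,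
    (div_le_one hKLU).2 (sub_nonpos.1 ?_)⟩
  have hUQ : ∀ i ≠ j, U i ≤ Q i := fun i hi => by
    rw [hU, hQ, minQuantum, if_neg hi]
    gcongr
    exact_mod_cast hq i
  have hprod := quantum_prod_le_prod hU hQ (prod_minQuantum_le_prod hq hqsum j)
  rw [KL_sub_KL (fun i => (hPpos i).ne') (fun i => (hQpos i).ne') (fun i => (hUpos i).ne')]
  exact sum_mul_logb_div_nonpos j (fun i => hanti (Nat.le_sub_one_of_lt i.isLt)) (hPpos j).le
    hUpos hQpos hUQ hprod
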